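/- (Non-concentration, regular case.) Let c : [0,H] → ℝ be twice continuously differentiable with c_m ≤ c(y) ≤ c_M for all y, and fix 0 < ε < Λ and a nonempty open interval (a,b) ⊆ (0,H). Then there exist μ₀ > 0 and d > 0 such that for every μ ≥ μ₀, every λ with (c_M + ε)μ² ≤ λ ≤ (c_M + Λ)μ², and every normalized Dirichlet solution u of the reduced problem with parameters (μ,λ), one has ∫_a^b u(y)² dy ≥ d. -/

import Mathlib

open MeasureTheory Set Filter Topology

noncomputable section

/-- `u` (with flux `v = c·u'` and weak derivative `g = u'`) is a solution of the reduced
problem `(c u')' + (λ - c μ²) u = 0` on the interval `[a, b]`: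
`u` is absolutely continuous with derivative `g ∈ L²`, the flux `v` agrees a.e. with `c·g`,
and `v` is absolutely continuous with derivative `(c μ² - λ)·u`. -/
def IsReducedSolutionOn (a b : ℝ) (c : ℝ → ℝ) (μ lam : ℝ) (u v g : ℝ → ℝ) : Prop :=
  IntervalIntegrable g volume a b ∧
  IntervalIntegrable (fun t => g t ^ 2) volume a b ∧
  (∀ y ∈ Set.Icc a b, u y = u a + ∫ t in a..y, g t) ∧
  (∀ᵐ y ∂volume.restrict (Set.Ioo a b), v y = c y * g y) ∧
  IntervalIntegrable (fun t => (c t * μ ^ 2 - lam) * u t) volume a b ∧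
  (∀ y ∈ Set.Icc a b, v y = v a + ∫ t in a..y, (c t * μ ^ 2 - lam) * u t)

/-- A coefficient on `[0, H]`: measurable and bounded between `cm` and `cM`. -/
def IsCoeff (H cm cM : ℝ) (c : ℝ → ℝ) : Prop :=
  Measurable c ∧ ∀ y ∈ Set.Icc (0 : ℝ) H, cm ≤ c y ∧ c y ≤ cM

/-!
Write `v = c u'` and `q = λ - cμ² ≥ εμ²`. The energy `E = v²/c + q u²` satisfies
`E' = -c' ((v/c)² + μ²u²)`, so `|E'| ≤ C E` with `C` independent of `μ` and `λ`, and by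
Gronwall `E` varies on `[0,H]` at most by the factor `m = exp (C H)`. As `∫₀ᴴ q u² ≥ εμ²`, this
forces `E ≥ εμ² / (H m)` everywhere.

On `[a,b]`, `(uv)' = v²/c - q u²` gives `∫ₐᵇ E = [uv]ₐᵇ + 2 ∫ₐᵇ q u²`. The boundary terms are
`O(E/μ)`, hence at most a quarter of `∫ₐᵇ E` once `μ` is large, so
`∫ₐᵇ q u² ≥ (b - a) εμ² / (4 H m)`, and `q ≤ (c_M + Λ) μ²` turns this into the lower bound
for `∫ₐᵇ u²`.
-/

open Real

theorem continuousOn_of_eq_add_integral {F f : ℝ → ℝ} {s t : ℝ} (hst : s ≤ t)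
    (hf : IntervalIntegrable f volume s t) (hF : ∀ y ∈ Icc s t, F y = F s + ∫ x in s..y, f x) :
    ContinuousOn F (Icc s t) := by
  have h := intervalIntegral.continuousOn_primitive_interval' hf left_mem_uIcc
  rw [uIcc_of_le hst] at h
  exact (continuousOn_const.add h).congr hF

theorem hasDerivAt_of_eq_add_integral {F f : ℝ → ℝ} {s t : ℝ} (hf : ContinuousOn f (Icc s t))
    (hF : ∀ y ∈ Icc s t, F y = F s + ∫ x in s..y, f x) {y : ℝ} (hy : y ∈ Ioo s t) :
    HasDerivAt F (f y) y := by
  have hnhds : Icc s t ∈ 𝓝 y := Icc_mem_nhds hy.1 hy.2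
  have hint : IntervalIntegrable f volume s y :=
    (hf.mono (Icc_subset_Icc_right hy.2.le)).intervalIntegrable_of_Icc hy.1.le
  have hprim := intervalIntegral.integral_hasDerivAt_right hint
    ((hf.mono Ioo_subset_Icc_self).stronglyMeasurableAtFilter isOpen_Ioo y hy)
    (hf.continuousAt hnhds)
  exact (hprim.const_add (F s)).congr_of_eventuallyEq (Filter.eventually_of_mem hnhds hF)

theorem ContDiffOn.exists_hasDerivAt_abs_le {f : ℝ → ℝ} {s t : ℝ} {n : WithTop ℕ∞}
    (hf : ContDiffOn ℝ n f (Icc s t)) (hn : 1 ≤ n) (hst : s < t) :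
    ∃ f' : ℝ → ℝ, ∃ K, 0 ≤ K ∧ (∀ y ∈ Ioo s t, HasDerivAt f (f' y) y) ∧
      ∀ y ∈ Ioo s t, |f' y| ≤ K := by
  obtain ⟨K, hK⟩ := isCompact_Icc.exists_bound_of_continuousOn
    (hf.continuousOn_derivWithin (uniqueDiffOn_Icc hst) hn)
  refine ⟨derivWithin f (Icc s t), K, (norm_nonneg _).trans (hK s (left_mem_Icc.mpr hst.le)),
    fun y hy => ?_, fun y hy => hK y (Ioo_subset_Icc_self hy)⟩
  exact (hf.differentiableOn (zero_lt_one.trans_le hn).ne' y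
    (Ioo_subset_Icc_self hy)).hasDerivWithinAt.hasDerivAt (Icc_mem_nhds hy.1 hy.2)

theorem monotoneOn_mul_exp_of_neg_mul_le_deriv {f f' : ℝ → ℝ} {s t k : ℝ}
    (hf : ContinuousOn f (Icc s t)) (hderiv : ∀ y ∈ Ioo s t, HasDerivAt f (f' y) y)
    (hle : ∀ y ∈ Ioo s t, -(k * f y) ≤ f' y) :
    MonotoneOn (fun y => f y * exp (k * y)) (Icc s t) := by
  have hexp : ∀ y, HasDerivAt (fun y => exp (k * y)) (exp (k * y) * k) y := fun y => by
    simpa using ((hasDerivAt_id y).const_mul k).exp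
  refine monotoneOn_of_hasDerivWithinAt_nonneg (convex_Icc s t)
    (f' := fun y => f' y * exp (k * y) + f y * (exp (k * y) * k))
    (hf.mul (continuous_exp.comp (continuous_const_mul k)).continuousOn) (fun y hy => ?_)
    (fun y hy => ?_)
  · rw [interior_Icc] at hy
    exact ((hderiv y hy).mul (hexp y)).hasDerivWithinAt
  · rw [interior_Icc] at hy
    have := hle y hy
    have := exp_pos (k * y)
    nlinarith

theorem le_exp_mul_mul_of_abs_deriv_le {E E' : ℝ → ℝ} {s t C : ℝ} (hC : 0 ≤ C)
    (hE : ContinuousOn E (Icc s t)) (hE0 : ∀ y ∈ Icc s t, 0 ≤ E y)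
    (hderiv : ∀ y ∈ Ioo s t, HasDerivAt E (E' y) y)
    (hbound : ∀ y ∈ Ioo s t, |E' y| ≤ C * E y) {y z : ℝ} (hy : y ∈ Icc s t)
    (hz : z ∈ Icc s t) :
    E y ≤ exp (C * (t - s)) * E z := by
  suffices h : E y ≤ exp (C * |y - z|) * E z by
    refine h.trans (mul_le_mul_of_nonneg_right (exp_le_exp.mpr ?_) (hE0 z hz))
    exact mul_le_mul_of_nonneg_left (abs_sub_le_of_le_of_le hy.1 hy.2 hz.1 hz.2) hC
  rcases le_total y z with hyz | hzy
  · have hmono := monotoneOn_mul_exp_of_neg_mul_le_deriv (k := C) hE hderiv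
      (fun x hx => by linarith [neg_abs_le (E' x), hbound x hx]) hy hz hyz
    rw [abs_of_nonpos (sub_nonpos.mpr hyz)]
    calc E y = E y * exp (C * y) * exp (-(C * y)) := by rw [mul_assoc, ← exp_add]; simp
      _ ≤ E z * exp (C * z) * exp (-(C * y)) := by gcongr
      _ = exp (C * -(y - z)) * E z := by rw [mul_assoc, ← exp_add]; ring_nf
  · have hmono := monotoneOn_mul_exp_of_neg_mul_le_deriv (k := -C) hE.neg
      (fun x hx => (hderiv x hx).neg)
      (fun x hx => by simp only [Pi.neg_apply]; linarith [le_abs_self (E' x), hbound x hx])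
      hz hy hzy
    simp only [Pi.neg_apply, neg_mul, neg_le_neg_iff] at hmono
    rw [abs_of_nonneg (sub_nonneg.mpr hzy)]
    calc E y = E y * exp (-(C * y)) * exp (C * y) := by rw [mul_assoc, ← exp_add]; simp
      _ ≤ E z * exp (-(C * z)) * exp (C * y) := by gcongr
      _ = exp (C * (y - z)) * E z := by rw [mul_assoc, ← exp_add]; ring_nf

theorem sub_mul_le_integral_of_le {f : ℝ → ℝ} {a b x : ℝ} (hab : a ≤ b)
    (hf : IntervalIntegrable f volume a b) (h : ∀ y ∈ Icc a b, x ≤ f y) :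
    (b - a) * x ≤ ∫ y in a..b, f y := by
  simpa using intervalIntegral.integral_mono_on hab intervalIntegrable_const hf h

theorem integral_le_sub_mul_of_le {f : ℝ → ℝ} {a b x : ℝ} (hab : a ≤ b)
    (hf : IntervalIntegrable f volume a b) (h : ∀ y ∈ Icc a b, f y ≤ x) :
    ∫ y in a..b, f y ≤ (b - a) * x := by
  simpa using intervalIntegral.integral_mono_on hab hf intervalIntegrable_const h

structure IsClassicalReducedSolutionOn (s t : ℝ) (c : ℝ → ℝ) (μ lam : ℝ) (u v : ℝ → ℝ) :
    Prop where
  continuousOn : ContinuousOn u (Icc s t)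
  continuousOn_flux : ContinuousOn v (Icc s t)
  hasDerivAt : ∀ y ∈ Ioo s t, HasDerivAt u (v y / c y) y
  hasDerivAt_flux : ∀ y ∈ Ioo s t, HasDerivAt v ((c y * μ ^ 2 - lam) * u y) y

namespace IsReducedSolutionOn

variable {s t : ℝ} {c : ℝ → ℝ} {μ lam : ℝ} {u v g : ℝ → ℝ}

theorem continuousOn_flux (h : IsReducedSolutionOn s t c μ lam u v g) (hst : s ≤ t) :
    ContinuousOn v (Icc s t) :=
  continuousOn_of_eq_add_integral hst h.2.2.2.2.1 h.2.2.2.2.2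

theorem eq_add_integral_flux_div (h : IsReducedSolutionOn s t c μ lam u v g)
    (hc : ∀ y ∈ Icc s t, c y ≠ 0) {y : ℝ} (hy : y ∈ Icc s t) :
    u y = u s + ∫ x in s..y, v x / c x := by
  rw [h.2.2.1 y hy]
  congr 1
  refine intervalIntegral.integral_congr_ae_restrict ?_
  rw [uIoc_of_le hy.1]
  have hflux : ∀ᵐ x ∂volume.restrict (Ioc s t), v x = c x * g x := by
    rw [← Measure.restrict_congr_set Ioo_ae_eq_Ioc]; exact h.2.2.2.1
  filter_upwards [ae_restrict_of_ae_restrict_of_subset (Ioc_subset_Ioc_right hy.2) hflux,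
    ae_restrict_mem measurableSet_Ioc] with x hx hmem
  rw [hx, mul_div_cancel_left₀ _ (hc x ⟨hmem.1.le, hmem.2.trans hy.2⟩)]

theorem isClassicalReducedSolutionOn (h : IsReducedSolutionOn s t c μ lam u v g) (hst : s ≤ t)
    (hc : ContinuousOn c (Icc s t)) (hc0 : ∀ y ∈ Icc s t, c y ≠ 0) :
    IsClassicalReducedSolutionOn s t c μ lam u v := by
  have hv := h.continuousOn_flux hst
  have hvc : ContinuousOn (fun x => v x / c x) (Icc s t) := hv.div hc hc0
  have hu := continuousOn_of_eq_add_integral hst (hvc.intervalIntegrable_of_Icc hst)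
    fun y hy => h.eq_add_integral_flux_div hc0 hy
  refine ⟨hu, hv, fun y hy => ?_, fun y hy => ?_⟩
  · exact hasDerivAt_of_eq_add_integral hvc (fun y hy => h.eq_add_integral_flux_div hc0 hy) hy
  · exact hasDerivAt_of_eq_add_integral
      (((hc.mul continuousOn_const).sub continuousOn_const).mul hu) h.2.2.2.2.2 hy

end IsReducedSolutionOn

def reducedEnergy (c : ℝ → ℝ) (μ lam : ℝ) (u v : ℝ → ℝ) (y : ℝ) : ℝ :=
  v y ^ 2 / c y + (lam - c y * μ ^ 2) * u y ^ 2

section reducedEnergy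

variable {c : ℝ → ℝ} {μ lam : ℝ} {u v : ℝ → ℝ} {y : ℝ}

theorem sq_div_le_reducedEnergy (hq : 0 ≤ lam - c y * μ ^ 2) :
    v y ^ 2 / c y ≤ reducedEnergy c μ lam u v y :=
  le_add_of_nonneg_right (by positivity)

theorem mul_sq_le_reducedEnergy (hc : 0 < c y) :
    (lam - c y * μ ^ 2) * u y ^ 2 ≤ reducedEnergy c μ lam u v y :=
  le_add_of_nonneg_left (by positivity)

theorem reducedEnergy_nonneg (hc : 0 < c y) (hq : 0 ≤ lam - c y * μ ^ 2) :
    0 ≤ reducedEnergy c μ lam u v y :=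
  (by positivity : (0 : ℝ) ≤ v y ^ 2 / c y).trans (sq_div_le_reducedEnergy hq)

theorem mul_sq_mul_le_reducedEnergy {ε : ℝ} (hc : 0 < c y) (hq : ε * μ ^ 2 ≤ lam - c y * μ ^ 2) :
    ε * (μ ^ 2 * u y ^ 2) ≤ reducedEnergy c μ lam u v y :=
  calc ε * (μ ^ 2 * u y ^ 2) = ε * μ ^ 2 * u y ^ 2 := by ring
    _ ≤ (lam - c y * μ ^ 2) * u y ^ 2 := by gcongr
    _ ≤ _ := mul_sq_le_reducedEnergy hc

theorem abs_mul_mul_le_reducedEnergy {cM ε : ℝ} (hc : 0 < c y) (hcM : c y ≤ cM) (hε : 0 < ε)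
    (hq : ε * μ ^ 2 ≤ lam - c y * μ ^ 2) :
    |u y * v y| * μ ≤ (1 / ε + cM) / 2 * reducedEnergy c μ lam u v y := by
  have hq0 : 0 ≤ lam - c y * μ ^ 2 := le_trans (by positivity) hq
  have hv : v y ^ 2 ≤ cM * reducedEnergy c μ lam u v y := by
    have := sq_div_le_reducedEnergy (u := u) (v := v) hq0
    rw [div_le_iff₀ hc] at this
    nlinarith [reducedEnergy_nonneg (u := u) (v := v) hc hq0]
  have hu : μ ^ 2 * u y ^ 2 ≤ reducedEnergy c μ lam u v y / ε := by
    rw [le_div_iff₀ hε, mul_comm]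
    exact mul_sq_mul_le_reducedEnergy hc hq
  rw [abs_mul, div_mul_eq_mul_div, le_div_iff₀ two_pos, add_mul, div_mul_eq_mul_div, one_mul]
  calc |u y| * |v y| * μ * 2 = 2 * (μ * |u y|) * |v y| := by ring
    _ ≤ μ ^ 2 * u y ^ 2 + v y ^ 2 := by
      nlinarith [sq_nonneg (μ * |u y| - |v y|), sq_abs (u y), sq_abs (v y)]
    _ ≤ _ := add_le_add hu hv

theorem abs_deriv_reducedEnergy_le {cm ε K c' : ℝ} (hcm : 0 < cm) (hc : cm ≤ c y) (hε : 0 < ε)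
    (hq : ε * μ ^ 2 ≤ lam - c y * μ ^ 2) (hK : |c'| ≤ K) :
    |-c' * ((v y / c y) ^ 2 + μ ^ 2 * u y ^ 2)| ≤
      K * (1 / cm + 1 / ε) * reducedEnergy c μ lam u v y := by
  have hc0 : 0 < c y := hcm.trans_le hc
  have hq0 : 0 ≤ lam - c y * μ ^ 2 := le_trans (by positivity) hq
  have hE0 := reducedEnergy_nonneg (u := u) (v := v) hc0 hq0
  have hv : (v y / c y) ^ 2 ≤ reducedEnergy c μ lam u v y / cm :=
    calc (v y / c y) ^ 2 = v y ^ 2 / c y / c y := by ring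
      _ ≤ reducedEnergy c μ lam u v y / c y := by gcongr; exact sq_div_le_reducedEnergy hq0
      _ ≤ reducedEnergy c μ lam u v y / cm := by gcongr
  have hu : μ ^ 2 * u y ^ 2 ≤ reducedEnergy c μ lam u v y / ε := by
    rw [le_div_iff₀ hε, mul_comm]
    exact mul_sq_mul_le_reducedEnergy hc0 hq
  rw [abs_mul, abs_neg, abs_of_nonneg (by positivity : 0 ≤ (v y / c y) ^ 2 + μ ^ 2 * u y ^ 2)]
  calc |c'| * ((v y / c y) ^ 2 + μ ^ 2 * u y ^ 2)
      ≤ K * (reducedEnergy c μ lam u v y / cm + reducedEnergy c μ lam u v y / ε) := by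
        gcongr
        exact (abs_nonneg _).trans hK
    _ = K * (1 / cm + 1 / ε) * reducedEnergy c μ lam u v y := by ring

end reducedEnergy

namespace IsClassicalReducedSolutionOn

variable {s t : ℝ} {c : ℝ → ℝ} {μ lam : ℝ} {u v : ℝ → ℝ}

theorem mono (h : IsClassicalReducedSolutionOn s t c μ lam u v) {s' t' : ℝ} (hs : s ≤ s')
    (ht : t' ≤ t) : IsClassicalReducedSolutionOn s' t' c μ lam u v where
  continuousOn := h.continuousOn.mono (Icc_subset_Icc hs ht)
  continuousOn_flux := h.continuousOn_flux.mono (Icc_subset_Icc hs ht)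
  hasDerivAt y hy := h.hasDerivAt y (Ioo_subset_Ioo hs ht hy)
  hasDerivAt_flux y hy := h.hasDerivAt_flux y (Ioo_subset_Ioo hs ht hy)

theorem continuousOn_reducedEnergy (h : IsClassicalReducedSolutionOn s t c μ lam u v)
    (hc : ContinuousOn c (Icc s t)) (hc0 : ∀ y ∈ Icc s t, c y ≠ 0) :
    ContinuousOn (reducedEnergy c μ lam u v) (Icc s t) :=
  ((h.continuousOn_flux.pow 2).div hc hc0).add
    ((continuousOn_const.sub (hc.mul continuousOn_const)).mul (h.continuousOn.pow 2))

theorem hasDerivAt_reducedEnergy (h : IsClassicalReducedSolutionOn s t c μ lam u v) {y c' : ℝ}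
    (hy : y ∈ Ioo s t) (hc : HasDerivAt c c' y) (hc0 : c y ≠ 0) :
    HasDerivAt (reducedEnergy c μ lam u v) (-c' * ((v y / c y) ^ 2 + μ ^ 2 * u y ^ 2)) y := by
  have hu := h.hasDerivAt y hy
  have hv := h.hasDerivAt_flux y hy
  refine (((hv.fun_pow 2).div hc hc0).add
    (((hc.mul_const (μ ^ 2)).const_sub lam).mul (hu.fun_pow 2))).congr_deriv ?_
  field_simp
  ring

theorem reducedEnergy_le_exp_mul (h : IsClassicalReducedSolutionOn s t c μ lam u v)
    {c' : ℝ → ℝ} {cm ε K : ℝ} (hc : ContinuousOn c (Icc s t))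
    (hc' : ∀ y ∈ Ioo s t, HasDerivAt c (c' y) y) (hK : ∀ y ∈ Ioo s t, |c' y| ≤ K) (hK0 : 0 ≤ K)
    (hcm : 0 < cm) (hc_ge : ∀ y ∈ Icc s t, cm ≤ c y) (hε : 0 < ε)
    (hq : ∀ y ∈ Icc s t, ε * μ ^ 2 ≤ lam - c y * μ ^ 2) {y z : ℝ} (hy : y ∈ Icc s t)
    (hz : z ∈ Icc s t) :
    reducedEnergy c μ lam u v y ≤
      exp (K * (1 / cm + 1 / ε) * (t - s)) * reducedEnergy c μ lam u v z := by
  have hc0 : ∀ y ∈ Icc s t, 0 < c y := fun y hy => hcm.trans_le (hc_ge y hy)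
  refine le_exp_mul_mul_of_abs_deriv_le (by positivity)
    (h.continuousOn_reducedEnergy hc fun y hy => (hc0 y hy).ne')
    (fun y hy => reducedEnergy_nonneg (hc0 y hy) (le_trans (by positivity) (hq y hy)))
    (fun y hy => h.hasDerivAt_reducedEnergy hy (hc' y hy) (hc0 y (Ioo_subset_Icc_self hy)).ne')
    (fun y hy => ?_) hy hz
  have hy' := Ioo_subset_Icc_self hy
  exact abs_deriv_reducedEnergy_le hcm (hc_ge y hy') hε (hq y hy') (hK y hy)

theorem integral_reducedEnergy (h : IsClassicalReducedSolutionOn s t c μ lam u v) (hst : s ≤ t)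
    (hc : ContinuousOn c (Icc s t)) (hc0 : ∀ y ∈ Icc s t, c y ≠ 0) :
    ∫ y in s..t, reducedEnergy c μ lam u v y =
      u t * v t - u s * v s + 2 * ∫ y in s..t, (lam - c y * μ ^ 2) * u y ^ 2 := by
  have hpot : ContinuousOn (fun y => (lam - c y * μ ^ 2) * u y ^ 2) (Icc s t) :=
    (continuousOn_const.sub (hc.mul continuousOn_const)).mul (h.continuousOn.pow 2)
  have hkin : ContinuousOn (fun y => v y ^ 2 / c y) (Icc s t) :=
    (h.continuousOn_flux.pow 2).div hc hc0
  have hparts : ∫ y in s..t, (v y ^ 2 / c y - (lam - c y * μ ^ 2) * u y ^ 2) =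
      u t * v t - u s * v s := by
    refine intervalIntegral.integral_eq_sub_of_hasDeriv_right_of_le hst
      (h.continuousOn.mul h.continuousOn_flux) (fun y hy => ?_)
      ((hkin.sub hpot).intervalIntegrable_of_Icc hst)
    refine (((h.hasDerivAt y hy).mul (h.hasDerivAt_flux y hy)).congr_deriv ?_).hasDerivWithinAt
    field_simp [hc0 y (Ioo_subset_Icc_self hy)]
    ring
  have hsplit : reducedEnergy c μ lam u v =
      fun y => (v y ^ 2 / c y - (lam - c y * μ ^ 2) * u y ^ 2) +
        2 * ((lam - c y * μ ^ 2) * u y ^ 2) := by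
    funext y; unfold reducedEnergy; ring
  rw [hsplit, intervalIntegral.integral_add, intervalIntegral.integral_const_mul, hparts]
  · exact (hkin.sub hpot).intervalIntegrable_of_Icc hst
  · exact (hpot.intervalIntegrable_of_Icc hst).const_mul 2

end IsClassicalReducedSolutionOn

section NonConcentration

variable {c u v : ℝ → ℝ} {H cM ε μ lam m a b : ℝ}

theorem mul_le_integral_reducedEnergy (h : IsClassicalReducedSolutionOn 0 H c μ lam u v)
    (hc : ContinuousOn c (Icc 0 H)) (hc0 : ∀ y ∈ Icc 0 H, 0 < c y)
    (hq : ∀ y ∈ Icc 0 H, ε * μ ^ 2 ≤ lam - c y * μ ^ 2)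
    (hcomp : ∀ y ∈ Icc 0 H, ∀ z ∈ Icc 0 H,
      reducedEnergy c μ lam u v y ≤ m * reducedEnergy c μ lam u v z)
    (hnorm : ∫ y in 0..H, u y ^ 2 = 1) (ha : 0 ≤ a) (hab : a ≤ b) (hb : b ≤ H) :
    (b - a) * (ε * μ ^ 2) ≤ H * m * ∫ y in a..b, reducedEnergy c μ lam u v y := by
  have hH : 0 ≤ H := ha.trans (hab.trans hb)
  have hsub : Icc a b ⊆ Icc 0 H := Icc_subset_Icc ha hb
  have hpot : IntervalIntegrable (fun y => (lam - c y * μ ^ 2) * u y ^ 2) volume 0 H :=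
    ((continuousOn_const.sub (hc.mul continuousOn_const)).mul (h.continuousOn.pow 2)
      ).intervalIntegrable_of_Icc hH
  rw [← intervalIntegral.integral_const_mul]
  refine sub_mul_le_integral_of_le hab
    ((((h.continuousOn_reducedEnergy hc fun y hy => (hc0 y hy).ne').mono hsub
      ).intervalIntegrable_of_Icc hab).const_mul _) fun z hz => ?_
  calc ε * μ ^ 2 = ∫ y in 0..H, ε * μ ^ 2 * u y ^ 2 := by
        rw [intervalIntegral.integral_const_mul, hnorm, mul_one]
    _ ≤ ∫ y in 0..H, (lam - c y * μ ^ 2) * u y ^ 2 :=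
        intervalIntegral.integral_mono_on hH
          ((continuousOn_const.mul (h.continuousOn.pow 2)).intervalIntegrable_of_Icc hH) hpot
          fun y hy => mul_le_mul_of_nonneg_right (hq y hy) (sq_nonneg _)
    _ ≤ (H - 0) * (m * reducedEnergy c μ lam u v z) := integral_le_sub_mul_of_le hH hpot
        fun y hy => (mul_sq_le_reducedEnergy (hc0 y hy)).trans (hcomp y hy z (hsub hz))
    _ = H * m * reducedEnergy c μ lam u v z := by ring

theorem four_mul_abs_mul_le_of_reducedEnergy_le {y I : ℝ} (hc : 0 < c y) (hcM : c y ≤ cM)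
    (hε : 0 < ε) (hq : ε * μ ^ 2 ≤ lam - c y * μ ^ 2) (hμ0 : 0 < μ)
    (hμ : 2 * (1 / ε + cM) * m ≤ (b - a) * μ) (hab : a < b) (hI : 0 ≤ I)
    (hE : (b - a) * reducedEnergy c μ lam u v y ≤ m * I) :
    4 * |u y * v y| ≤ I := by
  have hcoef : 0 ≤ 2 * (1 / ε + cM) := by linarith [one_div_pos.mpr hε]
  refine le_of_mul_le_mul_left ?_ (mul_pos (sub_pos.mpr hab) hμ0)
  calc (b - a) * μ * (4 * |u y * v y|) = 4 * (b - a) * (|u y * v y| * μ) := by ring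
    _ ≤ 4 * (b - a) * ((1 / ε + cM) / 2 * reducedEnergy c μ lam u v y) :=
        mul_le_mul_of_nonneg_left (abs_mul_mul_le_reducedEnergy hc hcM hε hq) (by linarith)
    _ = 2 * (1 / ε + cM) * ((b - a) * reducedEnergy c μ lam u v y) := by ring
    _ ≤ 2 * (1 / ε + cM) * (m * I) := mul_le_mul_of_nonneg_left hE hcoef
    _ = 2 * (1 / ε + cM) * m * I := by ring
    _ ≤ (b - a) * μ * I := by gcongr

theorem le_integral_sq_of_reducedEnergy_le_mul {Q : ℝ}
    (h : IsClassicalReducedSolutionOn 0 H c μ lam u v) (hc : ContinuousOn c (Icc 0 H))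
    (hc0 : ∀ y ∈ Icc 0 H, 0 < c y) (hcM : ∀ y ∈ Icc 0 H, c y ≤ cM) (hε : 0 < ε)
    (hq : ∀ y ∈ Icc 0 H, ε * μ ^ 2 ≤ lam - c y * μ ^ 2) (hlam : lam ≤ Q * μ ^ 2)
    (hcomp : ∀ y ∈ Icc 0 H, ∀ z ∈ Icc 0 H,
      reducedEnergy c μ lam u v y ≤ m * reducedEnergy c μ lam u v z)
    (hm : 0 ≤ m) (hμ0 : 0 < μ) (hμ : 2 * (1 / ε + cM) * m ≤ (b - a) * μ)
    (hnorm : ∫ y in 0..H, u y ^ 2 = 1) (ha : 0 ≤ a) (hab : a < b) (hb : b ≤ H) :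
    (b - a) * ε ≤ 4 * H * m * Q * ∫ y in a..b, u y ^ 2 := by
  set I := ∫ y in a..b, reducedEnergy c μ lam u v y
  have hsub : Icc a b ⊆ Icc 0 H := Icc_subset_Icc ha hb
  have hEint : IntervalIntegrable (reducedEnergy c μ lam u v) volume a b :=
    ((h.continuousOn_reducedEnergy hc fun y hy => (hc0 y hy).ne').mono hsub
      ).intervalIntegrable_of_Icc hab.le
  have hI0 : 0 ≤ I := intervalIntegral.integral_nonneg hab.le fun y hy =>
    reducedEnergy_nonneg (hc0 y (hsub hy)) (le_trans (by positivity) (hq y (hsub hy)))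
  have hbdry : ∀ z ∈ Icc a b, 4 * |u z * v z| ≤ I := fun z hz =>
    four_mul_abs_mul_le_of_reducedEnergy_le (hc0 z (hsub hz)) (hcM z (hsub hz)) hε
      (hq z (hsub hz)) hμ0 hμ hab hI0 (by
        rw [← intervalIntegral.integral_const_mul]
        exact sub_mul_le_integral_of_le hab.le (hEint.const_mul _)
          fun y hy => hcomp z (hsub hz) y (hsub hy))
  have hparts := (h.mono ha hb).integral_reducedEnergy hab.le (hc.mono hsub)
    fun y hy => (hc0 y (hsub hy)).ne'
  have hpotc : ContinuousOn (fun y => (lam - c y * μ ^ 2) * u y ^ 2) (Icc a b) :=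
    ((continuousOn_const.sub (hc.mul continuousOn_const)).mul (h.continuousOn.pow 2)).mono hsub
  have hpot : ∫ y in a..b, (lam - c y * μ ^ 2) * u y ^ 2 ≤ Q * μ ^ 2 * ∫ y in a..b, u y ^ 2 := by
    rw [← intervalIntegral.integral_const_mul]
    refine intervalIntegral.integral_mono_on hab.le (hpotc.intervalIntegrable_of_Icc hab.le)
      ((((h.continuousOn.pow 2).mono hsub).intervalIntegrable_of_Icc hab.le).const_mul _)
      fun y hy => mul_le_mul_of_nonneg_right ?_ (sq_nonneg _)
    nlinarith [(hc0 y (hsub hy)).le, sq_nonneg μ]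
  have hIpot : I ≤ 4 * ∫ y in a..b, (lam - c y * μ ^ 2) * u y ^ 2 := by
    have := hbdry a (left_mem_Icc.mpr hab.le)
    have := hbdry b (right_mem_Icc.mpr hab.le)
    linarith [le_abs_self (u b * v b), neg_abs_le (u a * v a)]
  refine le_of_mul_le_mul_right ?_ (by positivity : 0 < μ ^ 2)
  calc (b - a) * ε * μ ^ 2 = (b - a) * (ε * μ ^ 2) := by ring
    _ ≤ H * m * I := mul_le_integral_reducedEnergy h hc hc0 hq hcomp hnorm ha hab.le hb
    _ ≤ H * m * (4 * (Q * μ ^ 2 * ∫ y in a..b, u y ^ 2)) :=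
        mul_le_mul_of_nonneg_left (by linarith) (mul_nonneg (by linarith) hm)
    _ = 4 * H * m * Q * (∫ y in a..b, u y ^ 2) * μ ^ 2 := by ring

end NonConcentration

/-- non-concentration in the regular case `c ∈ C²([0,H])`. -/
theorem stmt5 (cm cM H : ℝ) (hcm : 0 < cm) (hcmM : cm < cM) (hH : 0 < H)
    (c : ℝ → ℝ) (hc2 : ContDiffOn ℝ 2 c (Set.Icc 0 H))
    (hbound : ∀ y ∈ Set.Icc (0 : ℝ) H, cm ≤ c y ∧ c y ≤ cM)
    (ε Λ : ℝ) (hε : 0 < ε) (hεΛ : ε < Λ)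
    (a b : ℝ) (ha : 0 ≤ a) (hab : a < b) (hb : b ≤ H) :
    ∃ μ₀ > (0:ℝ), ∃ d > (0:ℝ),
      ∀ μ : ℝ, μ₀ ≤ μ →
      ∀ lam : ℝ, (cM + ε) * μ ^ 2 ≤ lam → lam ≤ (cM + Λ) * μ ^ 2 →
      ∀ u v g : ℝ → ℝ, IsReducedSolutionOn 0 H c μ lam u v g →
      u 0 = 0 → u H = 0 → (∫ y in (0:ℝ)..H, u y ^ 2) = 1 →
      d ≤ ∫ y in a..b, u y ^ 2 := by
  obtain ⟨c', K, hK0, hc', hK⟩ := hc2.exists_hasDerivAt_abs_le one_le_two hH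
  have hc0 : ∀ y ∈ Icc 0 H, 0 < c y := fun y hy => hcm.trans_le (hbound y hy).1
  have hcM : 0 < cM := hcm.trans hcmM
  have hΛ : 0 < Λ := hε.trans hεΛ
  have hba : 0 < b - a := sub_pos.mpr hab
  set m := exp (K * (1 / cm + 1 / ε) * H)
  refine ⟨2 * (1 / ε + cM) * m / (b - a), by positivity,
    (b - a) * ε / (4 * H * m * (cM + Λ)), by positivity, ?_⟩
  intro μ hμ lam hlam₁ hlam₂ u v g hsol _ _ hnorm
  have hμ0 : 0 < μ := lt_of_lt_of_le (by positivity) hμ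
  have hq : ∀ y ∈ Icc 0 H, ε * μ ^ 2 ≤ lam - c y * μ ^ 2 := fun y hy => by
    nlinarith [(hbound y hy).2]
  have h := hsol.isClassicalReducedSolutionOn hH.le hc2.continuousOn fun y hy => (hc0 y hy).ne'
  have hcomp : ∀ y ∈ Icc 0 H, ∀ z ∈ Icc 0 H,
      reducedEnergy c μ lam u v y ≤ m * reducedEnergy c μ lam u v z := fun y hy z hz => by
    simpa only [sub_zero] using h.reducedEnergy_le_exp_mul hc2.continuousOn hc' hK hK0 hcm
      (fun y hy => (hbound y hy).1) hε hq hy hz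
  rw [div_le_iff₀ hba] at hμ
  rw [div_le_iff₀ (by positivity)]
  have := le_integral_sq_of_reducedEnergy_le_mul h hc2.continuousOn hc0
    (fun y hy => (hbound y hy).2) hε hq hlam₂ hcomp (exp_pos _).le hμ0 (by linarith) hnorm ha hab hb
  linarith
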